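/- Let K be a noetherian commutative ring, A a unital K-algebra which is left coherent (the kernel of every homomorphism of finitely generated free left A-modules is finitely generated), and Δ ∈ A a well-tempered element. Then the unital homotope B = Â_Δ is left coherent: for every homomorphism of finitely generated free left B-modules M → N, the kernel is a finitely generated B-module. -/

import Mathlib

open scoped TensorProduct

noncomputable section

universe u v

/-! ### The homotope of an algebra at an element -/

variable (K : Type v) [CommRing K] (A : Type u) [Ring A] [Algebra K A]

/-- The (non-unital) homotope of a ring `A` at an element `Δ`: the same underlying
additive group, with multiplication `a ∘ b = a * Δ * b`. -/
@[ext]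
structure Homotope {A : Type u} [Ring A] (Δ : A) : Type u where
  /-- the underlying element of `A` -/
  val : A

namespace Homotope

variable {A} (Δ : A)

theorem val_injective : Function.Injective (Homotope.val (Δ := Δ)) := fun a b h => by
  cases a; cases b; cases h; rfl

instance : Zero (Homotope Δ) := ⟨⟨0⟩⟩
instance : Add (Homotope Δ) := ⟨fun x y => ⟨x.val + y.val⟩⟩
instance : Neg (Homotope Δ) := ⟨fun x => ⟨-x.val⟩⟩
instance : Sub (Homotope Δ) := ⟨fun x y => ⟨x.val - y.val⟩⟩
instance : SMul ℕ (Homotope Δ) := ⟨fun n x => ⟨n • x.val⟩⟩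
instance : SMul ℤ (Homotope Δ) := ⟨fun n x => ⟨n • x.val⟩⟩
instance : Mul (Homotope Δ) := ⟨fun x y => ⟨x.val * Δ * y.val⟩⟩
instance : SMul K (Homotope Δ) := ⟨fun k x => ⟨k • x.val⟩⟩

@[simp] theorem zero_val : (0 : Homotope Δ).val = 0 := rfl
@[simp] theorem add_val (x y : Homotope Δ) : (x + y).val = x.val + y.val := rfl
@[simp] theorem neg_val (x : Homotope Δ) : (-x).val = -x.val := rfl
@[simp] theorem sub_val (x y : Homotope Δ) : (x - y).val = x.val - y.val := rfl
@[simp] theorem mul_val (x y : Homotope Δ) : (x * y).val = x.val * Δ * y.val := rfl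
@[simp] theorem smul_val (k : K) (x : Homotope Δ) : (k • x).val = k • x.val := rfl

instance : AddCommGroup (Homotope Δ) :=
  (val_injective Δ).addCommGroup Homotope.val rfl (fun _ _ => rfl) (fun _ => rfl)
    (fun _ _ => rfl) (fun _ _ => rfl) (fun _ _ => rfl)

instance : NonUnitalRing (Homotope Δ) :=
  { (inferInstance : AddCommGroup (Homotope Δ)),
    (inferInstance : Mul (Homotope Δ)) with
    left_distrib := fun x y z => by ext; simp [mul_add]
    right_distrib := fun x y z => by ext; simp [add_mul]
    zero_mul := fun x => by ext; simp
    mul_zero := fun x => by ext; simp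
    mul_assoc := fun x y z => by ext; simp [mul_assoc] }

/-- the projection to `A` as an additive map -/
def valAddHom : Homotope Δ →+ A :=
  { toFun := Homotope.val, map_zero' := rfl, map_add' := fun _ _ => rfl }

instance : Module K (Homotope Δ) :=
  (val_injective Δ).module K (valAddHom Δ) (fun _ _ => rfl)

instance : IsScalarTower K (Homotope Δ) (Homotope Δ) :=
  ⟨fun k x y => by ext; simp [smul_mul_assoc]⟩

instance : SMulCommClass K (Homotope Δ) (Homotope Δ) :=
  ⟨fun k x y => by ext; simp [mul_smul_comm]⟩

end Homotope

/-- The unital homotope of `A` at `Δ`, obtained from the non-unital homotope by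
adjoining a unit: `B = K·1 ⊕ A_Δ`. -/
abbrev UnitalHomotope (Δ : A) : Type _ := Unitization K (Homotope Δ)

namespace UnitalHomotope

variable (Δ : A)

/-- The non-unital algebra map `A_Δ → A`, `a ↦ a·Δ`. -/
def phi1 : Homotope Δ →ₙₐ[K] A :=
  { toFun := fun x => x.val * Δ
    map_smul' := fun k x => smul_mul_assoc k x.val Δ
    map_zero' := zero_mul Δ
    map_add' := fun x y => add_mul x.val y.val Δ
    map_mul' := fun x y => mul_assoc (x.val * Δ) y.val Δ }

/-- The non-unital algebra map `A_Δ → A`, `a ↦ Δ·a`. -/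
def phi2 : Homotope Δ →ₙₐ[K] A :=
  { toFun := fun x => Δ * x.val
    map_smul' := fun k x => mul_smul_comm k Δ x.val
    map_zero' := mul_zero Δ
    map_add' := fun x y => mul_add Δ x.val y.val
    map_mul' := fun x y => by
      show Δ * (x.val * Δ * y.val) = Δ * x.val * (Δ * y.val)
      simp [mul_assoc] }

/-- The algebra homomorphism `ψ₁ : B → A`, determined by `a ↦ a·Δ` on `B⁺ = A`. -/
def psi1 : UnitalHomotope K A Δ →ₐ[K] A := Unitization.lift (phi1 K A Δ)

/-- The algebra homomorphism `ψ₂ : B → A`, determined by `a ↦ Δ·a` on `B⁺ = A`. -/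
def psi2 : UnitalHomotope K A Δ →ₐ[K] A := Unitization.lift (phi2 K A Δ)

/-- The augmentation `B → K` of the unital homotope. -/
def aug : UnitalHomotope K A Δ →ₐ[K] K := Unitization.fstHom K (Homotope Δ)

/-- The augmentation ideal `B⁺ ⊆ B`, as a left ideal (hence a left `B`-module). -/
def plusLeft : Ideal (UnitalHomotope K A Δ) := RingHom.ker (aug K A Δ).toRingHom

/-- The augmentation, as a ring homomorphism on the opposite algebra. -/
def augOp : (UnitalHomotope K A Δ)ᵐᵒᵖ →+* K :=
  RingHom.fromOpposite (aug K A Δ).toRingHom (fun x y => Commute.all _ _)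

/-- The augmentation ideal `B⁺`, as a left ideal of `Bᵐᵒᵖ`, i.e. as a right `B`-module. -/
def plusRight : Ideal (UnitalHomotope K A Δ)ᵐᵒᵖ := RingHom.ker (augOp K A Δ)

end UnitalHomotope

open UnitalHomotope

/-- An element `Δ` of a `K`-algebra `A` is *well-tempered* if the two-sided ideal
generated by `Δ` is all of `A`, and the augmentation ideal `B⁺` of the unital homotope
`B = Â_Δ` is projective both as a left and as a right `B`-module. -/
def WellTempered (Δ : A) : Prop :=
  TwoSidedIdeal.span ({Δ} : Set A) = ⊤ ∧
    Module.Projective (UnitalHomotope K A Δ) (plusLeft K A Δ) ∧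
    Module.Projective (UnitalHomotope K A Δ)ᵐᵒᵖ (plusRight K A Δ)

namespace UnitalHomotope

variable {A} (Δ : A)

/-- `A` as a left module over the unital homotope `B = Â_Δ`, via `ψ₁`. -/
instance instModulePsi1 : Module (UnitalHomotope K A Δ) A :=
  Module.compHom A (psi1 K A Δ).toRingHom

theorem smul_def (b : UnitalHomotope K A Δ) (a : A) : b • a = psi1 K A Δ b * a := rfl

instance : SMulCommClass (UnitalHomotope K A Δ) K A :=
  ⟨fun b k a => mul_smul_comm k (psi1 K A Δ b) a⟩

instance : SMulCommClass K (UnitalHomotope K A Δ) A :=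
  ⟨fun k b a => (mul_smul_comm k (psi1 K A Δ b) a).symm⟩

instance : IsScalarTower K (UnitalHomotope K A Δ) A :=
  ⟨fun k b a => by
    rw [smul_def, smul_def, map_smul, smul_mul_assoc]⟩

end UnitalHomotope

end

/-! The left `B`-module `A` (acting through `ψ₁`) is identified with `B⁺` by `a ↦ inr a`.
A `B`-linear map `f : Bⁿ → Bᵐ` is right multiplication by a matrix `C`, and since
`inr a * b = inr (a * ψ₂ b)`, on `(B⁺)ⁿ = Aⁿ` it is right multiplication by the `A`-matrix `ψ₂ C`.
Hence `ker f ∩ (B⁺)ⁿ` is the kernel of an `A`-linear map, finitely generated over `A` by coherence,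
and so over `B`: writing `1 = ∑ xⱼ Δ yⱼ`, every `a = ∑ ψ₁(inr (a xⱼ)) yⱼ`, so `A` is a finitely
generated `B`-module. The image of `ker f` under the augmentation `Bⁿ → Kⁿ` is finitely generated
because `K` is noetherian, and together the two pieces generate `ker f`. -/

namespace Unitization

variable {R N : Type*} [CommRing R] [NonUnitalRing N] [Module R N] [IsScalarTower R N N]
  [SMulCommClass R N N]

instance instModuleFst : Module (Unitization R N) R :=
  Module.compHom R (fstHom R N).toRingHom

instance : IsScalarTower R (Unitization R N) R :=
  ⟨fun r b s => by
    show (r • b).fst * s = r * (b.fst * s)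
    rw [fst_smul, smul_eq_mul, mul_assoc]⟩

def fstLinearMap : Unitization R N →ₗ[Unitization R N] R where
  toFun x := x.fst
  map_add' := fst_add
  map_smul' := fst_mul

instance {ι : Type*} [IsNoetherianRing R] [Finite ι] :
    IsNoetherian (Unitization R N) (ι → R) :=
  isNoetherian_of_tower R inferInstance

end Unitization

namespace UnitalHomotope

variable {K : Type v} [CommRing K] {A : Type u} [Ring A] [Algebra K A] {Δ : A}

instance : IsScalarTower (UnitalHomotope K A Δ) A A :=
  ⟨fun _ _ _ => mul_assoc _ _ _⟩

theorem psi1_inr (x : Homotope Δ) : psi1 K A Δ x = x.val * Δ := by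
  simp [psi1, phi1]

theorem mul_inr (b : UnitalHomotope K A Δ) (a : A) :
    b * ((⟨a⟩ : Homotope Δ) : UnitalHomotope K A Δ) = ((⟨b • a⟩ : Homotope Δ) : _) := by
  refine Unitization.ext (by simp) (Homotope.ext ?_)
  simp [smul_def, psi1, phi1, Algebra.smul_def, add_mul, mul_assoc]

theorem inr_mul (a : A) (b : UnitalHomotope K A Δ) :
    ((⟨a⟩ : Homotope Δ) : UnitalHomotope K A Δ) * b = ((⟨a * psi2 K A Δ b⟩ : Homotope Δ) : _) := by
  refine Unitization.ext (by simp) (Homotope.ext ?_)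
  simp [psi2, phi2, Algebra.smul_def, Algebra.commutes, mul_add, mul_assoc]

variable (K Δ) in
def inrLinearMap : A →ₗ[UnitalHomotope K A Δ] UnitalHomotope K A Δ where
  toFun a := ((⟨a⟩ : Homotope Δ) : UnitalHomotope K A Δ)
  map_add' a b := Unitization.inr_add K (⟨a⟩ : Homotope Δ) ⟨b⟩
  map_smul' b a := (mul_inr b a).symm

theorem inrLinearMap_injective : Function.Injective (inrLinearMap K Δ) := fun _ _ h =>
  congrArg Homotope.val (Unitization.inr_injective h)

open Pointwise in
theorem exists_finset_forall_mul_mem_span {z : A}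
    (hz : z ∈ AddSubgroup.closure (Set.univ * {Δ} * Set.univ)) :
    ∃ F : Finset A, ∀ a : A, a * z ∈ Submodule.span (UnitalHomotope K A Δ) (F : Set A) := by
  classical
  induction hz using AddSubgroup.closure_induction with
  | mem z hz =>
    obtain ⟨_, ⟨x, -, d, hd, rfl⟩, y, -, rfl⟩ := hz
    rw [Set.mem_singleton_iff.mp hd]
    refine ⟨{y}, fun a => ?_⟩
    have hsmul : a * (x * Δ * y) = inrLinearMap K Δ (a * x) • y := by
      rw [smul_def, inrLinearMap, LinearMap.coe_mk, AddHom.coe_mk, psi1_inr]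
      simp only [mul_assoc]
    rw [hsmul]
    exact Submodule.smul_mem _ _ (Submodule.subset_span (by simp))
  | zero => exact ⟨∅, fun a => by simp⟩
  | add z w _ _ hz hw =>
    obtain ⟨F, hF⟩ := hz
    obtain ⟨G, hG⟩ := hw
    refine ⟨F ∪ G, fun a => ?_⟩
    rw [mul_add, Finset.coe_union]
    exact Submodule.add_mem _ (Submodule.span_mono Set.subset_union_left (hF a))
      (Submodule.span_mono Set.subset_union_right (hG a))
  | neg z _ hz =>
    obtain ⟨F, hF⟩ := hz
    exact ⟨F, fun a => by simpa only [mul_neg] using Submodule.neg_mem _ (hF a)⟩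

theorem finite_of_span_eq_top (hΔ : TwoSidedIdeal.span {Δ} = ⊤) :
    Module.Finite (UnitalHomotope K A Δ) A := by
  have h1 : (1 : A) ∈ TwoSidedIdeal.span {Δ} := hΔ ▸ trivial
  rw [TwoSidedIdeal.mem_span_iff_mem_addSubgroup_closure] at h1
  obtain ⟨F, hF⟩ := exists_finset_forall_mul_mem_span (K := K) h1
  exact ⟨⟨F, eq_top_iff.mpr fun a _ => mul_one a ▸ hF a⟩⟩

variable {ι κ : Type*} [Fintype ι] [DecidableEq ι]

def psi2Map (f : (ι → UnitalHomotope K A Δ) →ₗ[UnitalHomotope K A Δ] (κ → UnitalHomotope K A Δ)) :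
    (ι → A) →ₗ[A] (κ → A) :=
  ((LinearMap.toMatrixRight' f).map (psi2 K A Δ)).toLinearMapRight'

theorem apply_inrLinearMap_compLeft
    (f : (ι → UnitalHomotope K A Δ) →ₗ[UnitalHomotope K A Δ] (κ → UnitalHomotope K A Δ))
    (a : ι → A) :
    f ((inrLinearMap K Δ).compLeft ι a) = (inrLinearMap K Δ).compLeft κ (psi2Map f a) := by
  conv_lhs => rw [← Matrix.toLinearMapRight'.apply_symm_apply f]
  funext j
  simp only [psi2Map, Matrix.toLinearMapRight'_apply, LinearMap.compLeft_apply, Function.comp_apply,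
    Matrix.vecMul, dotProduct, Matrix.map_apply, map_sum]
  exact Finset.sum_congr rfl fun i _ => inr_mul (a i) _

theorem ker_inf_ker_fstLinearMap_compLeft
    (f : (ι → UnitalHomotope K A Δ) →ₗ[UnitalHomotope K A Δ] (κ → UnitalHomotope K A Δ)) :
    LinearMap.ker f ⊓ LinearMap.ker (Unitization.fstLinearMap.compLeft ι) =
      ((LinearMap.ker (psi2Map f)).restrictScalars (UnitalHomotope K A Δ)).map
        ((inrLinearMap K Δ).compLeft ι) := by
  ext x
  simp only [Submodule.mem_inf, LinearMap.mem_ker, Submodule.mem_map,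
    Submodule.restrictScalars_mem]
  constructor
  · rintro ⟨hfx, hx⟩
    have hx' : x = (inrLinearMap K Δ).compLeft ι (fun i => (x i).snd.val) :=
      funext fun i => Unitization.ext (congrFun hx i) rfl
    refine ⟨_, ?_, hx'.symm⟩
    rw [hx', apply_inrLinearMap_compLeft] at hfx
    exact funext fun j => inrLinearMap_injective ((congrFun hfx j).trans (map_zero _).symm)
  · rintro ⟨a, ha, rfl⟩
    refine ⟨by rw [apply_inrLinearMap_compLeft, ha, map_zero], ?_⟩
    exact funext fun i => Unitization.fst_inr K (⟨a i⟩ : Homotope Δ)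

end UnitalHomotope

/-- If `K` is noetherian, `A` is a left coherent `K`-algebra and `Δ ∈ A` is
well-tempered, then the unital homotope `B = Â_Δ` is left coherent: the kernel of any
homomorphism of finitely generated free left `B`-modules is finitely generated. -/
theorem homotope_coherent {K : Type v} [CommRing K] [IsNoetherianRing K] {A : Type u} [Ring A]
    [Algebra K A]
    (hA : ∀ (n m : ℕ) (f : (Fin n → A) →ₗ[A] (Fin m → A)), (LinearMap.ker f).FG)
    (Δ : A) (h : WellTempered K A Δ) :
    ∀ (n m : ℕ) (f : (Fin n → UnitalHomotope K A Δ) →ₗ[UnitalHomotope K A Δ]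
        (Fin m → UnitalHomotope K A Δ)),
      (LinearMap.ker f).FG := by
  intro n m f
  have := UnitalHomotope.finite_of_span_eq_top (K := K) h.1
  refine Submodule.fg_of_fg_map_of_fg_inf_ker (Unitization.fstLinearMap.compLeft (Fin n))
    (IsNoetherian.noetherian _) ?_
  rw [UnitalHomotope.ker_inf_ker_fstLinearMap_compLeft]
  exact ((hA n m _).restrictScalars).map _
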